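/- Let E be a Hilbert C*-module over a C*-algebra A, and let (J_i) be a family of closed left ideals of B = closure of span⟨E,E⟩. Then the closed subspace generated by the union ⋃_i E(J_i) equals E(J), where J is the closed left ideal generated by ⋃_i J_i; i.e., the map J ↦ E(J) preserves arbitrary suprema. -/

import Mathlib

open scoped InnerProductSpace RightActions
open Filter Topology

/-- The Hilbert C⋆-module class `CStarModule` as it stood in Mathlib of December 2024 (right
`A`-action via `Aᵐᵒᵖ`); Mathlib's `CStarModule` is now a left-module class. -/
class RightCStarModule (A E : Type*) [NonUnitalSemiring A] [StarRing A] [Module ℂ A]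
    [AddCommGroup E] [Module ℂ E] [PartialOrder A] [SMul Aᵐᵒᵖ E] [Norm A] [Norm E]
    extends Inner A E where
  inner_add_right {x} {y} {z} : inner x (y + z) = inner x y + inner x z
  inner_self_nonneg {x} : 0 ≤ inner x x
  inner_self {x} : inner x x = 0 ↔ x = 0
  inner_op_smul_right {a : A} {x y : E} : inner x (y <• a) = inner x y * a
  inner_smul_right_complex {z : ℂ} {x} {y} : inner x (z • y) = z • inner x y
  star_inner x y : star (inner x y) = inner y x
  norm_eq_sqrt_norm_inner_self x : ‖x‖ = √‖inner x x‖

section Defs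

variable (A : Type*) (E : Type*) [NonUnitalCStarAlgebra A] [PartialOrder A] [StarOrderedRing A]
  [NormedAddCommGroup E] [NormedSpace ℂ E] [SMul Aᵐᵒᵖ E] [RightCStarModule A E]

/-- An operator on a Hilbert C*-module is *adjointable* if it admits an adjoint with respect to
the `A`-valued inner product. -/
def Adjointable (T : E →L[ℂ] E) : Prop :=
  ∃ S : E →L[ℂ] E, ∀ x y : E, ⟪T x, y⟫_A = ⟪x, S y⟫_A

/-- `EJ A E J` is the closed linear span `E(J)` of `{ξ • a : ξ ∈ E, a ∈ J}`. -/
noncomputable def EJ (J : Set A) : Submodule ℂ E :=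
  (Submodule.span ℂ {y : E | ∃ ξ : E, ∃ a ∈ J, y = ξ <• a}).topologicalClosure

/-- `JM A E M` is the closed linear span `J(M)` of `{⟪η, m⟫ : η ∈ E, m ∈ M}`. -/
noncomputable def JM (M : Set E) : Submodule ℂ A :=
  (Submodule.span ℂ {a : A | ∃ η : E, ∃ m ∈ M, a = ⟪η, m⟫_A}).topologicalClosure

/-- `BS A E` is the C*-algebra `B`, the closure of the linear span of all inner products. -/
noncomputable def BS : Set A :=
  closure (Submodule.span ℂ {a : A | ∃ η ξ : E, a = ⟪η, ξ⟫_A} : Set A)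

/-- `KE A E` is `K(E)`, the closed (non-unital) algebra generated by the rank-one operators
`θ_{η,ξ} : x ↦ η • ⟪ξ, x⟫`. -/
noncomputable def KE : NonUnitalSubalgebra ℂ (E →L[ℂ] E) :=
  (NonUnitalAlgebra.adjoin ℂ
    {T : E →L[ℂ] E | ∃ η ξ : E, ∀ x : E, T x = η <• ⟪ξ, x⟫_A}).topologicalClosure

end Defs

/-!
For a closed subspace `M`, `E(J) ⊆ M` exactly when `J` lies in the closed left ideal
`{a | E • a ⊆ M}`. Taking for `M` the closed span of the `E(Jᵢ)`, the intersection of `L` with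
this ideal is a closed left ideal of `B` containing every `Jᵢ`, hence is `L` by minimality, and
so `E(L) ⊆ M`. The reverse inclusion is monotonicity of `J ↦ E(J)`.
-/

namespace RightCStarModule

section Monotone

variable {A E : Type*} [NormedAddCommGroup E] [NormedSpace ℂ E] [SMul Aᵐᵒᵖ E]

lemma EJ_mono {J J' : Set A} (h : J ⊆ J') : EJ A E J ≤ EJ A E J' :=
  Submodule.topologicalClosure_mono <| Submodule.span_mono fun _ ⟨ξ, a, ha, hy⟩ => ⟨ξ, a, h ha, hy⟩

end Monotone

section Action

variable {A E : Type*} [NonUnitalCStarAlgebra A] [PartialOrder A]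
  [NormedAddCommGroup E] [NormedSpace ℂ E] [SMul Aᵐᵒᵖ E] [RightCStarModule A E]

lemma inner_sub_right (x y z : E) : ⟪x, y - z⟫_A = ⟪x, y⟫_A - ⟪x, z⟫_A :=
  eq_sub_of_add_eq <| by rw [← inner_add_right, sub_add_cancel]

lemma inner_op_smul_left (ξ y : E) (a : A) : ⟪ξ <• a, y⟫_A = star a * ⟪ξ, y⟫_A := by
  rw [← star_inner (A := A) y, inner_op_smul_right, star_mul, star_inner]

lemma norm_sq_eq_norm_inner_self (x : E) : ‖x‖ ^ 2 = ‖⟪x, x⟫_A‖ := by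
  rw [norm_eq_sqrt_norm_inner_self (A := A) x, Real.sq_sqrt (norm_nonneg _)]

lemma ext_inner_left {x y : E} (h : ∀ z : E, ⟪z, x⟫_A = ⟪z, y⟫_A) : x = y :=
  sub_eq_zero.mp <| (inner_self (A := A)).mp <| by rw [inner_sub_right, h (x - y), sub_self]

lemma op_smul_add (ξ : E) (a b : A) : ξ <• (a + b) = ξ <• a + ξ <• b :=
  ext_inner_left (A := A) fun z => by simp only [inner_op_smul_right, inner_add_right, mul_add]

lemma op_smul_complex_smul (ξ : E) (c : ℂ) (a : A) : ξ <• (c • a) = c • (ξ <• a) :=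
  ext_inner_left (A := A) fun z => by
    simp only [inner_op_smul_right, inner_smul_right_complex, mul_smul_comm]

lemma op_smul_mul (ξ : E) (a b : A) : ξ <• (a * b) = (ξ <• a) <• b :=
  ext_inner_left (A := A) fun z => by simp only [inner_op_smul_right, mul_assoc]

lemma norm_op_smul_le (ξ : E) (a : A) : ‖ξ <• a‖ ≤ ‖ξ‖ * ‖a‖ := by
  have h : ‖ξ <• a‖ ^ 2 ≤ (‖ξ‖ * ‖a‖) ^ 2 := by
    rw [norm_sq_eq_norm_inner_self (A := A), inner_op_smul_left, inner_op_smul_right]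
    calc ‖star a * (⟪ξ, ξ⟫_A * a)‖ ≤ ‖star a‖ * (‖⟪ξ, ξ⟫_A‖ * ‖a‖) :=
          (norm_mul_le _ _).trans (mul_le_mul_of_nonneg_left (norm_mul_le _ _) (norm_nonneg _))
      _ = (‖ξ‖ * ‖a‖) ^ 2 := by rw [norm_star, ← norm_sq_eq_norm_inner_self (A := A)]; ring
  exact pow_le_pow_iff_left₀ (norm_nonneg _) (by positivity) two_ne_zero |>.mp h

variable (A) in
noncomputable def opSmulCLM (ξ : E) : A →L[ℂ] E :=
  LinearMap.mkContinuous
    { toFun := fun a => ξ <• a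
      map_add' := op_smul_add ξ
      map_smul' := op_smul_complex_smul ξ }
    ‖ξ‖ (norm_op_smul_le ξ)

@[simp]
lemma opSmulCLM_apply (ξ : E) (a : A) : opSmulCLM A ξ a = ξ <• a := rfl

variable (A) in
/-- The right-action analogue of `Submodule.colon M ⊤`: the largest `J` with `E • J ⊆ M`. -/
noncomputable def colon (M : Submodule ℂ E) : Submodule ℂ A :=
  ⨅ ξ : E, M.comap (opSmulCLM A ξ : A →ₗ[ℂ] E)

lemma mem_colon {M : Submodule ℂ E} {a : A} : a ∈ colon A M ↔ ∀ ξ : E, ξ <• a ∈ M := by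
  simp [colon]

lemma isClosed_colon {M : Submodule ℂ E} (hM : IsClosed (M : Set E)) :
    IsClosed (colon A M : Set A) := by
  simpa only [colon, Submodule.coe_iInf, Submodule.comap_coe, ContinuousLinearMap.coe_coe] using
    isClosed_iInter fun ξ : E => hM.preimage (opSmulCLM A ξ).continuous

lemma mul_mem_colon {M : Submodule ℂ E} (b : A) {a : A} (ha : a ∈ colon A M) :
    b * a ∈ colon A M :=
  mem_colon.mpr fun ξ => op_smul_mul ξ b a ▸ mem_colon.mp ha (ξ <• b)

lemma EJ_le_iff {J : Set A} {M : Submodule ℂ E} (hM : IsClosed (M : Set E)) :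
    EJ A E J ≤ M ↔ J ⊆ colon A M := by
  constructor
  · intro h a ha
    exact mem_colon.mpr fun ξ =>
      h <| Submodule.le_topologicalClosure _ <| Submodule.subset_span ⟨ξ, a, ha, rfl⟩
  · intro h
    refine Submodule.topologicalClosure_minimal _ (Submodule.span_le.mpr ?_) hM
    rintro _ ⟨ξ, a, ha, rfl⟩
    exact mem_colon.mp (h ha) ξ

end Action

end RightCStarModule

open RightCStarModule

variable {A E : Type*} [NonUnitalCStarAlgebra A] [PartialOrder A] [StarOrderedRing A]
  [NormedAddCommGroup E] [NormedSpace ℂ E] [SMul Aᵐᵒᵖ E] [RightCStarModule A E]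

theorem sSup_EJ_eq_EJ_sSup_general {ι : Type*} (J : ι → Submodule ℂ A)
    (L : Submodule ℂ A) (hLB : (L : Set A) ⊆ BS A E) (hLclosed : IsClosed (L : Set A))
    (hLleft : ∀ b ∈ BS A E, ∀ j ∈ L, b * j ∈ L) (hJL : ∀ i, (J i : Set A) ⊆ L)
    (hLmin : ∀ I : Submodule ℂ A, (I : Set A) ⊆ BS A E → IsClosed (I : Set A) →
      (∀ b ∈ BS A E, ∀ j ∈ I, b * j ∈ I) → (∀ i, (J i : Set A) ⊆ I) → L ≤ I) :
    (Submodule.span ℂ (⋃ i, ((EJ A E (J i : Set A) : Submodule ℂ E) : Set E))).topologicalClosure =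
      EJ A E (L : Set A) := by
  set M :=
    (Submodule.span ℂ (⋃ i, ((EJ A E (J i : Set A) : Submodule ℂ E) : Set E))).topologicalClosure
  have hM : IsClosed (M : Set E) := Submodule.isClosed_topologicalClosure _
  have hJM : ∀ i, (J i : Set A) ⊆ colon A M := fun i => (EJ_le_iff hM).mp fun _ hx =>
    Submodule.le_topologicalClosure _ (Submodule.subset_span (Set.mem_iUnion_of_mem i hx))
  have hLM : L ≤ L ⊓ colon A M :=
    hLmin _ (fun _ ha => hLB ha.1) (hLclosed.inter (isClosed_colon hM))
      (fun b hb _ ha => ⟨hLleft b hb _ ha.1, mul_mem_colon b ha.2⟩)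
      (fun i => Set.subset_inter (hJL i) (hJM i))
  apply le_antisymm
  · exact Submodule.topologicalClosure_minimal _
      (Submodule.span_le.mpr (Set.iUnion_subset fun i => EJ_mono (hJL i)))
      (Submodule.isClosed_topologicalClosure _)
  · exact (EJ_le_iff hM).mpr fun _ ha => (hLM ha).2

/-- The map `J ↦ E(J)` preserves arbitrary suprema : the closed subspace generated by
`⋃ᵢ E(Jᵢ)` equals `E(L)`, where `L` is the closed left ideal of `B` generated by `⋃ᵢ Jᵢ`. -/
theorem sSup_EJ_eq_EJ_sSup {ι : Type*} (J : ι → Submodule ℂ A)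
    (hJB : ∀ i, ((J i : Set A)) ⊆ BS A E) (hJclosed : ∀ i, IsClosed ((J i : Set A)))
    (hJleft : ∀ i, ∀ b ∈ BS A E, ∀ j ∈ J i, b * j ∈ J i)
    (L : Submodule ℂ A) (hLB : (L : Set A) ⊆ BS A E) (hLclosed : IsClosed (L : Set A))
    (hLleft : ∀ b ∈ BS A E, ∀ j ∈ L, b * j ∈ L) (hJL : ∀ i, (J i : Set A) ⊆ L)
    (hLmin : ∀ I : Submodule ℂ A, (I : Set A) ⊆ BS A E → IsClosed (I : Set A) →
      (∀ b ∈ BS A E, ∀ j ∈ I, b * j ∈ I) → (∀ i, (J i : Set A) ⊆ I) → L ≤ I) :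
    (Submodule.span ℂ (⋃ i, ((EJ A E (J i : Set A) : Submodule ℂ E) : Set E))).topologicalClosure =
      EJ A E (L : Set A) :=
  sSup_EJ_eq_EJ_sSup_general J L hLB hLclosed hLleft hJL hLmin
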